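/- arXiv:2402.16393 — 4 statements merged into one kernel-verified Lean document; each statement's English description precedes it below -/
import Mathlib

section
/- Let p = (3/13)³ (a real number) and n = 2²⁰. Then 1 − Σ_{i=0}^{3} (n choose i) · pⁱ · (1−p)^{n−i} ≥ 1 − 10^{−4492}. -/
/-- Leakage probability lower bound for `n = 2²⁰`, `m = 10` (so `k = 13` bins):
`P(V ≥ 4) ≥ 1 − 10^{−4492}` for `V ~ B(n, (3/13)³)`. -/
theorem leakage_prob_n20_m10elts :
    let p : ℝ := (3 / 13) ^ 3
    let n : ℕ := 2 ^ 20
    1 - ∑ i ∈ Finset.range 4, (n.choose i : ℝ) * p ^ i * (1 - p) ^ (n - i)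
      ≥ 1 - (10 : ℝ) ^ (-4492 : ℤ) := by
  intro p n
  have hp : p = 27 / 2197 := by norm_num [p]
  have h1p : (1 : ℝ) - p = 2170 / 2197 := by rw [hp]; norm_num
  have hq0 : (0:ℝ) ≤ 2170 / 2197 := by norm_num
  have hq1 : (2170 / 2197 : ℝ) ≤ 1 := by norm_num
  have hkey : ((2170:ℝ)/2197) ^ 57 ≤ 1/2 := by
    rw [div_pow, div_le_div_iff₀ (by positivity) (by norm_num)]
    norm_num
  have hbig : ((2170:ℝ)/2197) ^ (n - 3) ≤ (1/2) ^ 18396 := by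
    have hn3 : n - 3 = 57 * 18396 + 1 := by norm_num [n]
    rw [hn3, pow_succ, pow_mul]
    calc (((2170:ℝ)/2197) ^ 57) ^ 18396 * (2170/2197)
        ≤ (1/2:ℝ) ^ 18396 * 1 :=
          mul_le_mul (pow_le_pow_left₀ (by positivity) hkey _) hq1 hq0 (by positivity)
      _ = (1/2:ℝ) ^ 18396 := mul_one _
  have hterm : ∀ i ∈ Finset.range 4,
      (n.choose i : ℝ) * p ^ i * (1 - p) ^ (n - i) ≤ 2^60 * (1/2)^18396 := by
    intro i hi
    have hi3 : i ≤ 3 := Nat.lt_succ_iff.mp (Finset.mem_range.mp hi)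
    have hc : (n.choose i : ℝ) ≤ 2^60 := by
      calc (n.choose i : ℝ) ≤ (n : ℝ)^i := by exact_mod_cast Nat.choose_le_pow n i
        _ ≤ (n : ℝ)^3 := by
            apply pow_le_pow_right₀ _ hi3
            norm_num [n]
        _ = 2^60 := by norm_num [n]
    have hpi : p ^ i ≤ 1 := by
      apply pow_le_one₀ _ _ <;> rw [hp] <;> norm_num
    have hpow : (1 - p) ^ (n - i) ≤ (1/2)^18396 := by
      rw [h1p]
      calc ((2170:ℝ)/2197) ^ (n - i) ≤ ((2170:ℝ)/2197) ^ (n - 3) := by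
            apply pow_le_pow_of_le_one hq0 hq1
            omega
        _ ≤ (1/2)^18396 := hbig
    calc (n.choose i : ℝ) * p ^ i * (1 - p) ^ (n - i)
        ≤ 2^60 * 1 * (1/2)^18396 := by
          apply mul_le_mul _ hpow (by positivity) (by positivity)
          apply mul_le_mul hc hpi (by positivity) (by positivity)
      _ = 2^60 * (1/2)^18396 := by ring
  have hsum : ∑ i ∈ Finset.range 4, (n.choose i : ℝ) * p ^ i * (1 - p) ^ (n - i)
      ≤ 4 * (2^60 * (1/2)^18396) := by
    calc _ ≤ ∑ _i ∈ Finset.range 4, ((2:ℝ)^60 * (1/2)^18396) := Finset.sum_le_sum hterm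
      _ = 4 * (2^60 * (1/2)^18396) := by simp [Finset.sum_const]
  have hfinal : (4:ℝ) * (2^60 * (1/2)^18396) ≤ (10 : ℝ) ^ (-4492 : ℤ) := by
    have h1 : (4:ℝ) * (2^60 * (1/2)^18396) = 2^62 / 2^18396 := by
      rw [div_pow, one_pow]; ring
    have h2 : (10 : ℝ) ^ (-4492 : ℤ) = 1 / 10^4492 := by
      rw [zpow_neg, one_div]; norm_num
    rw [h1, h2, div_le_div_iff₀ (by positivity) (by positivity), one_mul]
    calc (2:ℝ)^62 * 10^4492 ≤ 2^62 * 2^17968 := by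
          apply mul_le_mul_of_nonneg_left _ (by positivity)
          calc (10:ℝ)^4492 ≤ ((2:ℝ)^4)^4492 := by
                apply pow_le_pow_left₀ (by norm_num) (by norm_num)
            _ = 2^17968 := by rw [← pow_mul]
      _ = 2^18030 := by rw [← pow_add]
      _ ≤ 2^18396 := by
          apply pow_le_pow_right₀ (by norm_num)
          norm_num
  linarith [le_trans hsum hfinal]
end

section
/- Let R be a commutative ring, B ∈ R[Z] monic of degree m, A ∈ R[Z] with deg A ≤ n where n ≥ m. Let Q := A /ₘ B and Rm := A %ₘ B be the quotient and remainder, so A = B·Q + Rm with deg Rm < m and deg Q ≤ n − m. Then, writing reflect_d(F) for the coefficient-reversal of F with respect to degree bound d (reflect_d(F)(Z) = Z^d · F(1/Z)), one has: reflect_n(A) = reflect_{n−m}(Q) · reflect_m(B) + Z^{n−m+1} · reflect_{m−1}(Rm). -/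
open Polynomial

/-- Reversal identity behind fast Euclidean division: if `B` is monic of degree `m`,
`deg A ≤ n`, `m ≤ n`, `Q = A /ₘ B` and `Rm = A %ₘ B`, then
`reflect_n(A) = reflect_{n−m}(Q) · reflect_m(B) + Z^{n−m+1} · reflect_{m−1}(Rm)`. -/
theorem reflect_divByMonic_identity (R : Type*) [CommRing R] (m n : ℕ)
    (B A : Polynomial R) (hB : B.Monic) (hm : B.natDegree = m)
    (hA : A.natDegree ≤ n) (hmn : m ≤ n) :
    A.reflect n =
      (A /ₘ B).reflect (n - m) * B.reflect m
        + Polynomial.X ^ (n - m + 1) * (A %ₘ B).reflect (m - 1) := by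
  rcases subsingleton_or_nontrivial R with hS | hS
  · exact Subsingleton.elim _ _
  have hdiv : A = (A /ₘ B) * B + A %ₘ B := by
    conv_lhs => rw [← modByMonic_add_div A B]
    ring
  have hQ : (A /ₘ B).natDegree ≤ n - m := by
    rw [natDegree_divByMonic A hB, hm]
    omega
  rcases Nat.eq_zero_or_pos m with hm0 | hm0
  · subst hm0
    have hB1 : B = 1 := hB.natDegree_eq_zero.mp hm
    subst hB1
    simp [Polynomial.modByMonic_one, Polynomial.divByMonic_one, reflect_one]
  · have hR : (A %ₘ B).natDegree ≤ m - 1 := by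
      rcases eq_or_ne (A %ₘ B) 0 with h | h
      · simp [h]
      · have hlt : (A %ₘ B).degree < B.degree := degree_modByMonic_lt A hB
        have := natDegree_lt_natDegree h hlt
        rw [hm] at this
        omega
    have e1 : A.reflect n = ((A /ₘ B) * B).reflect n + (A %ₘ B).reflect n := by
      conv_lhs => rw [hdiv]
      exact reflect_add _ _ n
    have e2 := reflect_mul (A /ₘ B) B hQ hm.le
    rw [show n - m + m = n from by omega] at e2
    have e3 := reflect_mul (A %ₘ B) (1 : R[X]) hR
      (show (1 : R[X]).natDegree ≤ n - m + 1 by simp)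
    rw [show m - 1 + (n - m + 1) = n from by omega, mul_one, reflect_one] at e3
    rw [e1, e2, e3]; ring
end

section
/- Let R be a commutative ring, B ∈ R[Z] monic of degree m, and A ∈ R[Z] with deg A ≤ n where n ≥ m; let Q := A /ₘ B be the Euclidean quotient. Suppose U ∈ R[Z] satisfies reflect_m(B) · U ≡ 1 (mod Z^{n−m+1}), i.e., Z^{n−m+1} divides reflect_m(B)·U − 1. Then reflect_{n−m}(Q) ≡ reflect_n(A) · U (mod Z^{n−m+1}). -/
open Polynomial

/-- If `U` is an inverse of `reflect_m(B)` modulo `Z^{n−m+1}`, then the reversed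
quotient satisfies `reflect_{n−m}(A /ₘ B) ≡ reflect_n(A) · U (mod Z^{n−m+1})`. -/
theorem reflect_quotient_from_inverse (R : Type*) [CommRing R] (m n : ℕ)
    (B A : Polynomial R) (hB : B.Monic) (hm : B.natDegree = m)
    (hA : A.natDegree ≤ n) (hmn : m ≤ n) (U : Polynomial R)
    (hU : (Polynomial.X : Polynomial R) ^ (n - m + 1) ∣ B.reflect m * U - 1) :
    (Polynomial.X : Polynomial R) ^ (n - m + 1) ∣
      (A /ₘ B).reflect (n - m) - A.reflect n * U := by
  nontriviality R
  set Q := A /ₘ B with hQdef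
  set Rem := A %ₘ B with hRdef
  have hA' : B * Q + Rem = A := by
    rw [add_comm]; exact modByMonic_add_div A B
  have hQdeg : Q.natDegree ≤ n - m := by
    rw [hQdef, natDegree_divByMonic A hB, hm]
    exact Nat.sub_le_sub_right hA m
  have hn : m + (n - m) = n := Nat.add_sub_cancel' hmn
  have hRem : (X : Polynomial R) ^ (n - m + 1) ∣ Rem.reflect n := by
    rw [X_pow_dvd_iff]
    intro i hi
    rw [coeff_reflect]
    have hin : i ≤ n := le_trans (Nat.le_of_lt_succ hi) (Nat.sub_le n m)
    rw [revAt_le hin]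
    apply coeff_eq_zero_of_degree_lt
    have hdlt : Rem.degree < B.degree := degree_modByMonic_lt A hB
    have hBdeg : B.degree = (m : ℕ) := by
      rw [degree_eq_natDegree hB.ne_zero, hm]
    refine lt_of_lt_of_le (hBdeg ▸ hdlt) ?_
    exact_mod_cast Nat.le_sub_of_add_le (by omega)
  have key : A.reflect n = B.reflect m * Q.reflect (n - m) + Rem.reflect n := by
    conv_lhs => rw [← hA']
    rw [reflect_add]
    congr 1
    have h2 := reflect_mul (f := B) (g := Q) hm.le hQdeg
    rwa [hn] at h2
  have heq : Q.reflect (n - m) - A.reflect n * U =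
      Q.reflect (n - m) * (1 - B.reflect m * U) - Rem.reflect n * U := by
    rw [key]; ring
  rw [heq]
  refine dvd_sub (Dvd.dvd.mul_left ?_ _) (Dvd.dvd.mul_right hRem U)
  have := hU.neg_right
  simpa using this
end

section
/- Let q, N, a, b, y be natural numbers with 1 ≤ q, a < q, b < q, y < q, and q² < N. Define e := (a + N − b) mod N. Then: (i) e = 0 if and only if a = b; (ii) if b < a, then e = a − b, so 0 < e < q, and (y·e) mod N = y·(a − b); (iii) if a < b, then e = N − (b − a), so N − q < e < N, and (y·(N − e)) mod N = y·(b − a). Consequently, when a ≠ b, the value y can be recovered exactly by rational division: y = ((y·e) mod N)/e in case (ii) and y = ((y·(N−e)) mod N)/(N − e) in case (iii). -/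
/-!
For `a, b < N` the residue `(a + N - b) % N` is `a - b` when `b ≤ a` and `N - (b - a)` when
`a < b`, so it vanishes exactly when `a = b`. In either case the sender's product is `y · |a - b|`
modulo `N`, and since `y, |a - b| < q` and `q² < N` no wrap-around occurs: the product is the
integer `y · |a - b|` itself, from which `y` is read off by dividing by the nonzero `|a - b|`.
-/

lemma add_sub_mod_eq_sub_of_le {N a b : ℕ} (hba : b ≤ a) (ha : a < N) :
    (a + N - b) % N = a - b := by
  rw [show a + N - b = a - b + N by omega, Nat.add_mod_right, Nat.mod_eq_of_lt (by omega)]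

lemma add_sub_mod_eq_sub_sub_of_lt {N a b : ℕ} (hab : a < b) (hb : b ≤ N) :
    (a + N - b) % N = N - (b - a) := by
  rw [show a + N - b = N - (b - a) by omega, Nat.mod_eq_of_lt (by omega)]

lemma add_sub_mod_eq_zero_iff {N a b : ℕ} (ha : a < N) (hb : b < N) :
    (a + N - b) % N = 0 ↔ a = b := by
  rcases lt_or_ge a b with hab | hba
  · rw [add_sub_mod_eq_sub_sub_of_lt hab hb.le]
    omega
  · rw [add_sub_mod_eq_sub_of_le hba ha]
    omega

lemma mul_lt_of_lt_of_lt_of_sq_le {q N u v : ℕ} (hu : u < q) (hv : v < q) (hN : q ^ 2 ≤ N) :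
    u * v < N :=
  (Nat.mul_lt_mul'' hu hv).trans_le (sq q ▸ hN)

lemma Nat.cast_mul_div_cast_cancel {K : Type*} [Field K] [CharZero K] (y : ℕ) {d : ℕ}
    (hd : d ≠ 0) : ((y * d : ℕ) : K) / d = y := by
  push_cast
  exact mul_div_cancel_right₀ _ (Nat.cast_ne_zero.mpr hd)

theorem fhe_lhe_compatibility_general (q N a b y : ℕ)
    (ha : a < q) (hb : b < q) (hy : y < q) (hN : q ^ 2 < N) :
    let e := (a + N - b) % N
    (e = 0 ↔ a = b) ∧
    (b < a → e = a - b ∧ 0 < e ∧ e < q ∧ (y * e) % N = y * (a - b) ∧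
      (((y * e) % N : ℕ) : ℚ) / (e : ℚ) = (y : ℚ)) ∧
    (a < b → e = N - (b - a) ∧ N - q < e ∧ e < N ∧
      (y * (N - e)) % N = y * (b - a) ∧
      (((y * (N - e)) % N : ℕ) : ℚ) / ((N - e : ℕ) : ℚ) = (y : ℚ)) := by
  intro e
  have hqN : q < N := (Nat.le_self_pow two_ne_zero q).trans_lt hN
  refine ⟨add_sub_mod_eq_zero_iff (ha.trans hqN) (hb.trans hqN), fun hba => ?_, fun hab => ?_⟩
  · have he : e = a - b := add_sub_mod_eq_sub_of_le hba.le (ha.trans hqN)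
    have hmod : (y * e) % N = y * (a - b) := by
      rw [he, Nat.mod_eq_of_lt (mul_lt_of_lt_of_lt_of_sq_le hy (by omega) hN.le)]
    refine ⟨he, by omega, by omega, hmod, ?_⟩
    rw [hmod, he]
    exact Nat.cast_mul_div_cast_cancel y (by omega)
  · have he : e = N - (b - a) := add_sub_mod_eq_sub_sub_of_lt hab (hb.trans hqN).le
    have hNe : N - e = b - a := by omega
    have hmod : (y * (N - e)) % N = y * (b - a) := by
      rw [hNe, Nat.mod_eq_of_lt (mul_lt_of_lt_of_lt_of_sq_le hy (by omega) hN.le)]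
    refine ⟨he, by omega, by omega, hmod, ?_⟩
    rw [hmod, hNe]
    exact Nat.cast_mul_div_cast_cancel y (by omega)

/-- Correctness of the FHE–LHE compatibility mechanism: for `a, b, y < q` and
`q² < N`, with `e := (a + N − b) mod N`, (i) `e = 0 ↔ a = b`; (ii) if `b < a`
then `e = a − b ∈ (0, q)` and `(y·e) mod N = y·(a − b)`, so `y` is recovered by
rational division; (iii) if `a < b` then `e = N − (b − a) ∈ (N − q, N)` and
`(y·(N − e)) mod N = y·(b − a)`, so `y` is again recovered by rational division. -/
theorem fhe_lhe_compatibility (q N a b y : ℕ)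
    (hq : 1 ≤ q) (ha : a < q) (hb : b < q) (hy : y < q) (hN : q ^ 2 < N) :
    let e := (a + N - b) % N
    (e = 0 ↔ a = b) ∧
    (b < a → e = a - b ∧ 0 < e ∧ e < q ∧ (y * e) % N = y * (a - b) ∧
      (((y * e) % N : ℕ) : ℚ) / (e : ℚ) = (y : ℚ)) ∧
    (a < b → e = N - (b - a) ∧ N - q < e ∧ e < N ∧
      (y * (N - e)) % N = y * (b - a) ∧
      (((y * (N - e)) % N : ℕ) : ℚ) / ((N - e : ℕ) : ℚ) = (y : ℚ)) :=
  fhe_lhe_compatibility_general q N a b y ha hb hy hN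
end
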